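/- arXiv:1912.00614 — 3 statements merged into one kernel-verified Lean document; each statement's English description precedes it below -/
import Mathlib

section
/- For every clutter C over ground set V, the blocker of the blocker of C equals C. -/
/-!
Every member `A` of `C` meets every cover of `C`, so it covers `b(C)`. Conversely, if a set `A'`
contained no member of `C`, its complement would cover `C` and hence contain a minimal cover,
which misses `A'`; so every cover of `b(C)` contains a member of `C`. Minimal covers of `b(C)`
are therefore exactly the minimal members of `C`, which for a clutter are all of its members.
-/

/-- `B` is a cover of the clutter `C`: it intersects every member. -/
def IsCover {V : Type*} [DecidableEq V] (C : Set (Finset V)) (B : Finset V) : Prop :=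
  ∀ A ∈ C, (A ∩ B).Nonempty

/-- The blocker of `C`: the family of inclusion-minimal covers of `C`. -/
def Blocker {V : Type*} [DecidableEq V] (C : Set (Finset V)) : Set (Finset V) :=
  {B | IsCover C B ∧ ∀ B' ⊆ B, IsCover C B' → B' = B}

section Blocker

variable {V : Type*} [DecidableEq V] {C : Set (Finset V)}

theorem mem_blocker_iff_minimal {B : Finset V} : B ∈ Blocker C ↔ Minimal (IsCover C) B := by
  rw [minimal_iff]
  exact and_congr_right fun _ => ⟨fun h B' hB' hle => (h B' hle hB').symm,
    fun h B' hle hB' => (h hB' hle).symm⟩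

theorem exists_mem_blocker_subset {B : Finset V} (hB : IsCover C B) :
    ∃ B' ∈ Blocker C, B' ⊆ B := by
  obtain ⟨B', hle, hmin⟩ := exists_minimal_le_of_wellFoundedLT (IsCover C) B hB
  exact ⟨B', mem_blocker_iff_minimal.2 hmin, hle⟩

theorem isCover_blocker_of_mem {A : Finset V} (hA : A ∈ C) : IsCover (Blocker C) A :=
  fun _ hB => Finset.inter_comm A _ ▸ hB.1 A hA

theorem exists_mem_subset_of_isCover_blocker [Fintype V] {A' : Finset V}
    (h : IsCover (Blocker C) A') : ∃ A ∈ C, A ⊆ A' := by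
  by_contra! hC
  have hcov : IsCover C A'ᶜ := fun A hA => by
    rw [← Finset.sdiff_eq_inter_compl]
    exact Finset.sdiff_nonempty.2 (hC A hA)
  obtain ⟨B, hB, hBA'⟩ := exists_mem_blocker_subset hcov
  obtain ⟨x, hx⟩ := h B hB
  rw [Finset.mem_inter] at hx
  exact Finset.mem_compl.1 (hBA' hx.1) hx.2

end Blocker

/-- For every clutter `C`, the blocker of the blocker of `C` equals `C`. -/
theorem stmt_2 {V : Type*} [Fintype V] [DecidableEq V] (C : Set (Finset V))
    (hclutter : ∀ A ∈ C, ∀ B ∈ C, A ⊆ B → A = B) :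
    Blocker (Blocker C) = C := by
  ext A
  constructor
  · rintro ⟨hcov, hmin⟩
    obtain ⟨A₀, hA₀, hA₀A⟩ := exists_mem_subset_of_isCover_blocker hcov
    rwa [← hmin A₀ hA₀A (isCover_blocker_of_mem hA₀)]
  · intro hA
    refine ⟨isCover_blocker_of_mem hA, fun A' hA'A hcov => ?_⟩
    obtain ⟨A₀, hA₀, hA₀A'⟩ := exists_mem_subset_of_isCover_blocker hcov
    have hA₀_eq : A₀ = A := hclutter A₀ hA₀ A hA (hA₀A'.trans hA'A)
    exact hA'A.antisymm (hA₀_eq ▸ hA₀A')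
end

section
/- Let S be the cocycle space of PG(l-1,2), viewed as a subset of {0,1}^{2^l - 1}. Then the cuboid of S is an l-wise intersecting clutter: every at most l members have a common element, yet no element belongs to all members. -/
/-- The ground set of `PG(l-1,2)`: the nonzero vectors of `GF(2)^l`. -/
abbrev PGpt (l : ℕ) := {v : Fin l → ZMod 2 // v ≠ 0}

/-- The cocycle space of `PG(l-1,2)`, viewed as a set of 0-1 points indexed by the ground
set: the row space of the representation matrix, i.e. all maps `v ↦ u · v`. -/
def PGcocycleSpace (l : ℕ) : Set (PGpt l → ZMod 2) :=
  {p | ∃ u : Fin l → ZMod 2, ∀ v : PGpt l, p v = ∑ i, u i * v.1 i}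

/-- The member of the cuboid corresponding to a point `p`: element `(v, a)` belongs to it
iff `p v = a`. -/
def cubMember {l : ℕ} (p : PGpt l → ZMod 2) : Set (PGpt l × ZMod 2) :=
  {x | x.2 = p x.1}

/-!
Every point of the cocycle space is `v ↦ u ⬝ᵥ v` for some `u ∈ GF(2)^l`. Given `k ≤ l` of them,
with vectors `u₁, …, u_k`, the `k - 1 < l` homogeneous equations `(u_j - u₁) ⬝ᵥ v = 0` have a
nonzero solution `v`, and then `(v, u₁ ⬝ᵥ v)` is common to the `k` members. No element `(v, a)`
is common to all members: the zero cocycle forces `a = 0`, while the coordinate cocycle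
`w ↦ w i` for some `i` with `v i ≠ 0` forces `a = 1`.
-/

open Module

section Dual

variable {K V ι : Type*} [Field K] [AddCommGroup V] [Module K V] [FiniteDimensional K V]
  [Fintype ι]

theorem exists_ne_zero_forall_apply_eq_zero_of_card_lt (f : ι → Dual K V)
    (h : Fintype.card ι < finrank K V) : ∃ v ≠ (0 : V), ∀ i, f i v = 0 := by
  have hker : LinearMap.ker (LinearMap.pi f) ≠ ⊥ :=
    LinearMap.ker_ne_bot_of_finrank_lt (by rwa [finrank_fintype_fun_eq_card])
  obtain ⟨v, hv, hv0⟩ := Submodule.exists_mem_ne_zero_of_ne_bot hker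
  exact ⟨v, hv0, fun i => congrFun (LinearMap.mem_ker.mp hv) i⟩

theorem exists_ne_zero_forall_apply_eq_of_card_le (f : ι → Dual K V)
    (h : Fintype.card ι ≤ finrank K V) (hV : 0 < finrank K V) :
    ∃ v ≠ (0 : V), ∃ c : K, ∀ i, f i v = c := by
  have : Nontrivial V := finrank_pos_iff.mp hV
  rcases isEmpty_or_nonempty ι with _ | ⟨⟨i₀⟩⟩
  · obtain ⟨v, hv⟩ := exists_ne (0 : V)
    exact ⟨v, hv, 0, isEmptyElim⟩
  classical
  have hcard : Fintype.card {i // i ≠ i₀} < finrank K V := by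
    rw [Fintype.card_subtype_compl, Fintype.card_subtype_eq]
    have := Fintype.card_pos_iff.mpr ⟨i₀⟩
    omega
  obtain ⟨v, hv, hfv⟩ :=
    exists_ne_zero_forall_apply_eq_zero_of_card_lt (fun i : {i // i ≠ i₀} => f i - f i₀) hcard
  refine ⟨v, hv, f i₀ v, fun i => ?_⟩
  rcases eq_or_ne i i₀ with rfl | hi
  · rfl
  · exact sub_eq_zero.mp (hfv ⟨i, hi⟩)

end Dual

variable {l : ℕ}

theorem zero_mem_PGcocycleSpace : (0 : PGpt l → ZMod 2) ∈ PGcocycleSpace l :=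
  ⟨0, by simp⟩

theorem coord_mem_PGcocycleSpace (i : Fin l) :
    (fun v : PGpt l => v.1 i) ∈ PGcocycleSpace l :=
  ⟨Pi.single i 1, by simp [Pi.single_apply]⟩

theorem exists_forall_mem_cubMember_of_card_le (hl : 1 ≤ l) (F : Finset (PGpt l → ZMod 2))
    (hF : ↑F ⊆ PGcocycleSpace l) (hcard : F.card ≤ l) :
    ∃ x : PGpt l × ZMod 2, ∀ p ∈ F, x ∈ cubMember p := by
  choose u hu using fun p : F => hF p.2
  obtain ⟨v, hv, c, hc⟩ := exists_ne_zero_forall_apply_eq_of_card_le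
    (K := ZMod 2) (fun p => dotProductBilin (ZMod 2) (ZMod 2) (u p))
    (by simpa using hcard) (by rwa [finrank_fin_fun])
  exact ⟨(⟨v, hv⟩, c), fun p hp => (hc ⟨p, hp⟩).symm.trans (hu ⟨p, hp⟩ ⟨v, hv⟩).symm⟩

theorem not_exists_forall_PGcocycleSpace_mem_cubMember :
    ¬ ∃ x : PGpt l × ZMod 2, ∀ p ∈ PGcocycleSpace l, x ∈ cubMember p := by
  rintro ⟨⟨⟨v, hv⟩, a⟩, hx⟩
  obtain ⟨i, hi⟩ : ∃ i, v i ≠ 0 := Function.ne_iff.mp hv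
  have ha₀ : a = 0 := hx 0 zero_mem_PGcocycleSpace
  have ha₁ : a = v i := hx _ (coord_mem_PGcocycleSpace i)
  exact hi (ha₁ ▸ ha₀)

/-- For `S` the cocycle space of `PG(l-1,2)`, the cuboid of `S` is an `l`-wise
intersecting clutter: every at most `l` members have a common element, yet no element belongs
to all members. -/
theorem stmt_14 (l : ℕ) (hl : 1 ≤ l) :
    (∀ F : Finset (PGpt l → ZMod 2), ↑F ⊆ PGcocycleSpace l → F.card ≤ l →
      ∃ x : PGpt l × ZMod 2, ∀ p ∈ F, x ∈ cubMember p) ∧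
    ¬ ∃ x : PGpt l × ZMod 2, ∀ p ∈ PGcocycleSpace l, x ∈ cubMember p :=
  ⟨exists_forall_mem_cubMember_of_card_le hl, not_exists_forall_PGcocycleSpace_mem_cubMember⟩
end

section
/- If every bridgeless graph has three cycles whose union is the whole edge set (Jaeger's 8-flow theorem), then every bridgeless graph has 7 cycles such that every edge belongs to exactly 4 of them. -/
/-!
Put `C₁, C₂, C₃` into one family `C` indexed by `Fin 3`. For every `s ⊆ Fin 3` the symmetric
difference of the `C i` with `i ∈ s` is again a cycle, and it contains an edge `e` exactly when
`s` meets `{i | e ∈ C i}` in an odd number of elements. When that set is nonempty, toggling one of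
its elements pairs the odd subsets `s` with the even ones, so `e` lies in exactly half of the
eight symmetric differences. The one indexed by `s = ∅` is empty and can be dropped.
-/

/-- An edge set `C` of the graph `G` is a cycle if every vertex is incident with an even
number of edges of `C`. -/
def IsGraphCycle {V : Type} [Fintype V] [DecidableEq V] (G : SimpleGraph V)
    (C : Finset (Sym2 V)) : Prop :=
  ↑C ⊆ G.edgeSet ∧ ∀ v : V, Even ((C.filter (fun e => v ∈ e)).card)

/-- `G` is bridgeless: no edge lies in no cycle. -/
def Bridgeless {V : Type} [Fintype V] [DecidableEq V] (G : SimpleGraph V) : Prop :=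
  ¬ ∃ e ∈ G.edgeSet, ∀ C : Finset (Sym2 V), IsGraphCycle G C → e ∉ C

open Finset
open scoped symmDiff

namespace Finset

variable {α ι : Type*} [DecidableEq α]

lemma card_symmDiff_add_two_mul_card_inter (s t : Finset α) :
    #(s ∆ t) + 2 * #(s ∩ t) = #s + #t := by
  have hsub : s ∩ t ⊆ s ∪ t := inter_subset_left.trans subset_union_left
  rw [symmDiff_eq_sup_sdiff_inf, sup_eq_union, inf_eq_inter, card_sdiff_of_subset hsub]
  have := card_union_add_card_inter s t
  have := card_le_card hsub
  omega

lemma even_card_symmDiff_iff {s t : Finset α} : Even #(s ∆ t) ↔ (Even #s ↔ Even #t) := by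
  rw [← Nat.even_add, ← card_symmDiff_add_two_mul_card_inter]
  simp [Nat.even_add]

lemma filter_symmDiff (p : α → Prop) [DecidablePred p] (s t : Finset α) :
    (s ∆ t).filter p = s.filter p ∆ t.filter p := by
  ext a
  simp only [mem_filter, mem_symmDiff]
  tauto

def bigSymmDiff (s : Finset ι) (C : ι → Finset α) : Finset α :=
  s.fold (· ∆ ·) ∅ C

@[simp]
lemma bigSymmDiff_empty (C : ι → Finset α) : bigSymmDiff ∅ C = ∅ :=
  fold_empty

lemma bigSymmDiff_insert [DecidableEq ι] {s : Finset ι} {i : ι} (hi : i ∉ s)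
    (C : ι → Finset α) : bigSymmDiff (insert i s) C = C i ∆ bigSymmDiff s C :=
  fold_insert hi

lemma mem_bigSymmDiff [DecidableEq ι] {s : Finset ι} {C : ι → Finset α} {x : α} :
    x ∈ bigSymmDiff s C ↔ Odd #{i ∈ s | x ∈ C i} := by
  induction s using Finset.induction_on with
  | empty => simp
  | insert i s hi ih =>
    rw [bigSymmDiff_insert hi, mem_symmDiff, ih, filter_insert]
    by_cases hx : x ∈ C i
    · simp [hx, card_insert_of_notMem (fun h => hi (mem_filter.1 h).1), Nat.odd_add_one]
    · simp [hx]

lemma odd_card_symmDiff_singleton_iff {s : Finset α} {a : α} :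
    Odd #(s ∆ {a}) ↔ ¬Odd #s := by
  simp only [← Nat.not_even_iff_odd, even_card_symmDiff_iff, card_singleton]
  simp

lemma two_mul_card_odd_card_filter [Fintype ι] [DecidableEq ι] (p : ι → Prop)
    [DecidablePred p] (hp : ∃ t, p t) :
    2 * #{s : Finset ι | Odd #(s.filter p)} = 2 ^ Fintype.card ι := by
  obtain ⟨t, ht⟩ := hp
  have toggle (s : Finset ι) : Odd #((s ∆ {t}).filter p) ↔ ¬Odd #(s.filter p) := by
    rw [filter_symmDiff, filter_singleton, if_pos ht, odd_card_symmDiff_singleton_iff]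
  have toggle' (s : Finset ι) : Even #((s ∆ {t}).filter p) ↔ Odd #(s.filter p) := by
    rw [← Nat.not_odd_iff_even, toggle, not_not]
  have hswap : #{s : Finset ι | Odd #(s.filter p)} = #{s : Finset ι | ¬Odd #(s.filter p)} := by
    refine card_nbij' (· ∆ {t}) (· ∆ {t}) ?_ ?_ ?_ ?_ <;>
      simp [Set.MapsTo, Set.LeftInvOn, toggle, toggle']
  rw [two_mul, ← Fintype.card_finset, ← card_univ]
  nth_rw 2 [hswap]
  exact card_filter_add_card_filter_not _

lemma two_mul_card_mem_bigSymmDiff [Fintype ι] [DecidableEq ι] (C : ι → Finset α) {x : α}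
    (hx : ∃ i, x ∈ C i) :
    2 * #{s : Finset ι | x ∈ bigSymmDiff s C} = 2 ^ Fintype.card ι := by
  simp only [mem_bigSymmDiff]
  exact two_mul_card_odd_card_filter _ hx

end Finset

lemma Fintype.exists_fin_reindex_of_eq_empty {κ β : Type*} [Fintype κ] [DecidableEq β] {m : ℕ}
    (hcard : Fintype.card κ = m + 1) (D : κ → Finset β) {k₀ : κ} (hk₀ : D k₀ = ∅) :
    ∃ D' : Fin m → Finset β, (∀ j, ∃ k, D' j = D k) ∧
      ∀ x, #{j | x ∈ D' j} = #{k | x ∈ D k} := by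
  classical
  have hne : Fintype.card {k // k ≠ k₀} = m := by
    rw [Fintype.card_subtype_compl, Fintype.card_subtype_eq, hcard, Nat.add_sub_cancel]
  let σ := (Fintype.equivFinOfCardEq hne).symm
  refine ⟨fun j => D (σ j), fun j => ⟨σ j, rfl⟩, fun x => ?_⟩
  refine card_nbij (fun j => (σ j : κ)) (fun j hj => by simpa using hj) ?_ ?_
  · intro j₁ _ j₂ _ h
    exact σ.injective (Subtype.ext h)
  · intro k hk
    have hk' : k ≠ k₀ := by
      rintro rfl
      simp [hk₀] at hk
    exact ⟨σ.symm ⟨k, hk'⟩, by simpa using hk, by simp⟩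

namespace IsGraphCycle

variable {V : Type} {ι : Type*} [Fintype V] [DecidableEq V] {G : SimpleGraph V}

lemma empty : IsGraphCycle G ∅ :=
  ⟨by simp, fun _ => by simp⟩

lemma symmDiff {A B : Finset (Sym2 V)} (hA : IsGraphCycle G A) (hB : IsGraphCycle G B) :
    IsGraphCycle G (A ∆ B) := by
  refine ⟨fun e he => ?_, fun v => ?_⟩
  · rcases mem_symmDiff.1 he with ⟨h, _⟩ | ⟨h, _⟩
    · exact hA.1 h
    · exact hB.1 h
  · rw [filter_symmDiff, even_card_symmDiff_iff]
    exact iff_of_true (hA.2 v) (hB.2 v)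

lemma bigSymmDiff [DecidableEq ι] {C : ι → Finset (Sym2 V)} (hC : ∀ i, IsGraphCycle G (C i))
    (s : Finset ι) : IsGraphCycle G (bigSymmDiff s C) := by
  induction s using Finset.induction_on with
  | empty => simpa using empty
  | insert i s hi ih => simpa [bigSymmDiff_insert hi] using (hC i).symmDiff ih

end IsGraphCycle

/-- If every bridgeless graph has three cycles whose union is the whole edge
set (Jaeger's 8-flow theorem), then every bridgeless graph has 7 cycles such that every edge
belongs to exactly 4 of them. -/
theorem stmt_18 :
    (∀ (V : Type) [Fintype V] [DecidableEq V] (G : SimpleGraph V), Bridgeless G →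
      ∃ C1 C2 C3 : Finset (Sym2 V), IsGraphCycle G C1 ∧ IsGraphCycle G C2 ∧
        IsGraphCycle G C3 ∧ ↑(C1 ∪ C2 ∪ C3) = G.edgeSet) →
    (∀ (V : Type) [Fintype V] [DecidableEq V] (G : SimpleGraph V), Bridgeless G →
      ∃ D : Fin 7 → Finset (Sym2 V), (∀ i, IsGraphCycle G (D i)) ∧
        ∀ e ∈ G.edgeSet, (Finset.univ.filter (fun i => e ∈ D i)).card = 4) := by
  intro jaeger V _ _ G hG
  obtain ⟨C1, C2, C3, h1, h2, h3, hU⟩ := jaeger V G hG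
  let C : Fin 3 → Finset (Sym2 V) := ![C1, C2, C3]
  have hC : ∀ i, IsGraphCycle G (C i) := by
    intro i
    fin_cases i <;> assumption
  obtain ⟨D, hD, hcount⟩ := Fintype.exists_fin_reindex_of_eq_empty (m := 7) (by simp)
    (fun s : Finset (Fin 3) => bigSymmDiff s C) (bigSymmDiff_empty C)
  refine ⟨D, fun j => ?_, fun e he => ?_⟩
  · obtain ⟨s, hs⟩ := hD j
    exact hs ▸ IsGraphCycle.bigSymmDiff hC s
  · have hcover : ∃ i, e ∈ C i := by
      rw [← hU] at he
      simpa [C, Fin.exists_fin_succ, or_assoc] using he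
    have := two_mul_card_mem_bigSymmDiff C hcover
    rw [hcount]
    simp only [Fintype.card_fin] at this
    omega
end
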